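/- arXiv:2406.06066 — 4 statements merged into one kernel-verified Lean document; each statement's English description precedes it below -/
import Mathlib

section
/- Let η = η₁ + iη₂ be a complex number with 0 < η₂ < η₁. Then |2·cos(2πη)/(√2·e^(3πi/8)·sin(πη))| ≤ √2·(1 + πη₂)·e^(πη₂)/(πη₂). -/
/-!
The phase factor `exp (3πi/8)` has modulus one, and `‖cos z‖ ≤ cosh (Im z)`, `sinh (Im z) ≤ ‖sin z‖`
follow from the exponential formulas and the triangle inequality. With `t = π Im η` it remains to
show `cosh 2t / sinh t ≤ (1 + t) eᵗ / t`; clearing denominators this is `t e⁻²ᵗ + 1 + t ≤ e²ᵗ`,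
which follows from `e⁻²ᵗ ≤ 1` and `1 + 2t ≤ e²ᵗ`.
-/

open Complex in
theorem Complex.norm_cos_le_cosh_im (z : ℂ) : ‖cos z‖ ≤ Real.cosh z.im := by
  have h := norm_add_le (exp (z * I)) (exp (-z * I))
  rw [norm_exp, norm_exp] at h
  rw [cos, norm_div, Complex.norm_two, Real.cosh_eq]
  simp only [mul_re, I_re, I_im, neg_re, neg_im, mul_zero, mul_one, zero_sub, neg_neg] at h
  linarith

open Complex in
theorem Complex.sinh_im_le_norm_sin (z : ℂ) : Real.sinh z.im ≤ ‖sin z‖ := by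
  have h := norm_sub_norm_le (exp (-z * I)) (exp (z * I))
  rw [norm_exp, norm_exp] at h
  rw [sin, norm_div, norm_mul, norm_I, mul_one, Complex.norm_two, Real.sinh_eq]
  simp only [mul_re, I_re, I_im, neg_re, neg_im, mul_zero, mul_one, zero_sub, neg_neg] at h
  linarith

theorem Real.cosh_two_mul_div_sinh_le {t : ℝ} (ht : 0 < t) :
    Real.cosh (2 * t) / Real.sinh t ≤ (1 + t) * Real.exp t / t := by
  have hsinh : 0 < Real.sinh t := Real.sinh_pos_iff.2 ht
  rw [div_le_div_iff₀ hsinh ht, Real.cosh_eq, Real.sinh_eq]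
  have h2t : 1 + 2 * t ≤ Real.exp (2 * t) := by linarith [Real.add_one_le_exp (2 * t)]
  have hneg : Real.exp (-(2 * t)) ≤ 1 := Real.exp_le_one_iff.2 (by linarith)
  have hexp2 : Real.exp (2 * t) = Real.exp t * Real.exp t := by rw [two_mul, Real.exp_add]
  have hinv : Real.exp t * Real.exp (-t) = 1 := by rw [← Real.exp_add, add_neg_cancel, Real.exp_zero]
  nlinarith

theorem stmt_10_general (η : ℂ) (h1 : 0 < η.im) :
    ‖(2 * Complex.cos (2 * Real.pi * η) /
      (Real.sqrt 2 * Complex.exp (3 * Real.pi * Complex.I / 8) * Complex.sin (Real.pi * η)))‖ ≤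
    Real.sqrt 2 * (1 + Real.pi * η.im) * Real.exp (Real.pi * η.im) / (Real.pi * η.im) := by
  set t := Real.pi * η.im
  have ht : 0 < t := mul_pos Real.pi_pos h1
  have hcos : ‖Complex.cos (2 * Real.pi * η)‖ ≤ Real.cosh (2 * t) := by
    simpa [t, mul_assoc] using Complex.norm_cos_le_cosh_im (2 * Real.pi * η)
  have hsin : Real.sinh t ≤ ‖Complex.sin (Real.pi * η)‖ := by
    simpa [t] using Complex.sinh_im_le_norm_sin (Real.pi * η)
  have hphase : ‖Complex.exp (3 * Real.pi * Complex.I / 8)‖ = 1 := by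
    rw [show 3 * Real.pi * Complex.I / 8 = ((3 * Real.pi / 8 : ℝ) : ℂ) * Complex.I by push_cast; ring]
    exact Complex.norm_exp_ofReal_mul_I _
  rw [norm_div, norm_mul, norm_mul, norm_mul, hphase, mul_one, Complex.norm_two, Complex.norm_real,
    Real.norm_of_nonneg (Real.sqrt_nonneg 2)]
  calc 2 * ‖Complex.cos (2 * Real.pi * η)‖ / (Real.sqrt 2 * ‖Complex.sin (Real.pi * η)‖)
      ≤ 2 * Real.cosh (2 * t) / (Real.sqrt 2 * Real.sinh t) := by gcongr
    _ = Real.sqrt 2 * (Real.cosh (2 * t) / Real.sinh t) := by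
        field_simp
        exact (Real.sq_sqrt zero_le_two).symm
    _ ≤ Real.sqrt 2 * ((1 + t) * Real.exp t / t) :=
        mul_le_mul_of_nonneg_left (Real.cosh_two_mul_div_sinh_le ht) (Real.sqrt_nonneg 2)
    _ = _ := by ring

theorem stmt_10 (η : ℂ) (h1 : 0 < η.im) (h2 : η.im < η.re) :
    ‖(2 * Complex.cos (2 * Real.pi * η) /
      (Real.sqrt 2 * Complex.exp (3 * Real.pi * Complex.I / 8) * Complex.sin (Real.pi * η)))‖ ≤
    Real.sqrt 2 * (1 + Real.pi * η.im) * Real.exp (Real.pi * η.im) / (Real.pi * η.im) :=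
  stmt_10_general η h1
end

section
/- Let s = σ + it with t > 0 and 1 - σ > 0, let η = η₁ + iη₂ be the square root of (s-1)/(2πi) with η₁ + η₂ > 0. Then t·arctan(η₂/η₁) - 2πη₁η₂ ≤ -2π·η₂³/η₁ < 0. -/
lemma arctan_le_self' {x : ℝ} (hx : 0 ≤ x) : Real.arctan x ≤ x := by
  have h := Real.le_tan (x := Real.arctan x)
    (by rw [← Real.arctan_zero]; exact Real.arctan_strictMono.monotone hx) (Real.arctan_lt_pi_div_two x)
  rwa [Real.tan_arctan] at h

theorem stmt_13 (s η : ℂ) (ht : 0 < s.im) (hσ : 0 < 1 - s.re)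
    (hη : η ^ 2 = (s - 1) / (2 * Real.pi * Complex.I))
    (hsum : 0 < η.re + η.im) :
    s.im * Real.arctan (η.im / η.re) - 2 * Real.pi * η.re * η.im ≤
      -2 * Real.pi * η.im ^ 3 / η.re ∧
    -2 * Real.pi * η.im ^ 3 / η.re < 0 := by
  have hπ := Real.pi_pos
  have h2 : η ^ 2 * (2 * Real.pi * Complex.I) = s - 1 := by
    rw [hη, div_mul_cancel₀]
    simp [Complex.ext_iff, Real.pi_ne_zero]
  set a := η.re with ha
  set b := η.im with hb
  have hre := congrArg Complex.re h2
  have him := congrArg Complex.im h2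
  simp [Complex.mul_re, Complex.mul_im, pow_two, ← ha, ← hb] at hre him
  -- hre : ... = s.re - 1, him : ... = s.im
  have hab : 0 < a * b := by nlinarith [hre]
  have hbpos : 0 < b := by nlinarith
  have hapos : 0 < a := by nlinarith
  have hd : 0 < (a * a - b * b) * (2 * Real.pi) := him ▸ ht
  have hd2 : 0 < a * a - b * b := by nlinarith [hd, hπ]
  have haltb : b < a := by nlinarith [hd2, hsum]
  constructor
  · have harc : Real.arctan (b / a) ≤ b / a :=
      arctan_le_self' (by positivity)
    have hsimle : s.im * Real.arctan (b / a) ≤ s.im * (b / a) :=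
      mul_le_mul_of_nonneg_left harc (le_of_lt ht)
    have key : s.im * (b / a) - 2 * Real.pi * a * b = -2 * Real.pi * b ^ 3 / a := by
      field_simp
      nlinarith [him]
    linarith [hsimle, key ▸ le_refl (s.im * (b / a) - 2 * Real.pi * a * b)]
  · have h0 : 0 < 2 * Real.pi * b ^ 3 / a := by positivity
    have h3 : -2 * Real.pi * b ^ 3 / a = -(2 * Real.pi * b ^ 3 / a) := by ring
    rw [h3]; linarith
end

section
/- Let η₁, η₂ > 0 be real with η₂ ≤ η₁, let σ < 0 be real with -σ = 4πη₁η₂ - 1 > 0, and let m be a nonnegative integer with m ≤ η₁ + η₂ < m+1. Writing |η| = √(η₁² + η₂²), we have |η|^(1-σ)·((m+1)^σ/(-σ) + (m+1)^(σ-1)) ≤ (1 + (η₁+η₂+1)/(4πη₁η₂-1))·exp(-2π·η₁²η₂²/(η₁²+η₂²)). -/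
/-! Put `q = η₁² + η₂²` and `x = 2η₁η₂/q ∈ (0, 1]`. Since `log (1 + x) ≥ x / 2`,
`(η₁ + η₂)² = q (1 + x) ≥ q e^{x/2}`, i.e. `√q ≤ c (η₁ + η₂) < c (m + 1)` with `c = e^{-x/4}`.
Hence `√q^{1-σ} (m+1)^σ ≤ c^{-σ} √q ≤ c^{1-σ} (η₁ + η₂)` and `√q^{1-σ} (m+1)^{σ-1} ≤ c^{1-σ}`,
and `c^{1-σ} = c^{4πη₁η₂}` is exactly the exponential on the right-hand side. -/

open Real

lemma half_le_log_one_add {x : ℝ} (h0 : 0 ≤ x) (h1 : x ≤ 1) : x / 2 ≤ log (1 + x) :=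
  calc x / 2 ≤ 2 * x / (x + 2) := by
        rw [le_div_iff₀ (by linarith)]; nlinarith
    _ ≤ log (1 + x) := le_log_one_add_of_nonneg h0

lemma sqrt_sq_add_sq_le_exp_mul_add {a b : ℝ} (ha : 0 ≤ a) (hb : 0 ≤ b) :
    √(a ^ 2 + b ^ 2) ≤ exp (-(a * b / (2 * (a ^ 2 + b ^ 2)))) * (a + b) := by
  set q := a ^ 2 + b ^ 2
  rcases (show 0 ≤ q by positivity).eq_or_lt with hq | hq
  · rw [← hq, sqrt_zero]; positivity
  set x := 2 * a * b / q
  have hx1 : x ≤ 1 := by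
    rw [div_le_one hq]; nlinarith [sq_nonneg (a - b)]
  have hexp : exp (x / 2) ≤ 1 + x :=
    (le_log_iff_exp_le (by positivity)).mp (half_le_log_one_add (by positivity) hx1)
  have hsq : (a + b) ^ 2 = q * (1 + x) := by
    rw [mul_add, mul_div_cancel₀ _ hq.ne']; ring
  have hc : exp (-(a * b / (2 * q))) ^ 2 = (exp (x / 2))⁻¹ := by
    rw [← exp_nat_mul, ← exp_neg]; congr 1; simp only [x]; push_cast; field_simp
  rw [sqrt_le_left (by positivity), mul_pow, hc, hsq, le_inv_mul_iff₀ (exp_pos _), mul_comm]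
  gcongr

lemma rpow_one_sub_mul_add_le_of_le_mul {S M c L σ : ℝ} (hS : 0 ≤ S) (hM : 0 < M) (hσ : σ < 0)
    (hSM : S ≤ c * M) (hSL : S ≤ c * L) :
    S ^ (1 - σ) * (M ^ σ / (-σ) + M ^ (σ - 1)) ≤ c ^ (1 - σ) * (1 + L / (-σ)) := by
  have hratio : S / M ≤ c := by rwa [div_le_iff₀ hM]
  have hc : 0 ≤ c := (div_nonneg hS hM.le).trans hratio
  have hfirst : S ^ (1 - σ) * M ^ σ ≤ c ^ (1 - σ) * L :=
    calc S ^ (1 - σ) * M ^ σ = (S / M) ^ (-σ) * S := by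
          rw [div_rpow hS hM.le, rpow_neg hM.le, sub_eq_neg_add, rpow_add_one' hS (by linarith),
            div_inv_eq_mul]; ring
      _ ≤ c ^ (-σ) * (c * L) :=
          mul_le_mul (rpow_le_rpow (div_nonneg hS hM.le) hratio (by linarith)) hSL hS
            (rpow_nonneg hc _)
      _ = c ^ (1 - σ) * L := by
          rw [sub_eq_neg_add, rpow_add_one' hc (by linarith)]; ring
  have hsecond : S ^ (1 - σ) * M ^ (σ - 1) ≤ c ^ (1 - σ) :=
    calc S ^ (1 - σ) * M ^ (σ - 1) = (S / M) ^ (1 - σ) := by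
          rw [div_rpow hS hM.le, ← neg_sub, rpow_neg hM.le, div_eq_mul_inv, inv_inv]
      _ ≤ c ^ (1 - σ) := by gcongr; linarith
  calc S ^ (1 - σ) * (M ^ σ / (-σ) + M ^ (σ - 1))
      = S ^ (1 - σ) * M ^ σ / (-σ) + S ^ (1 - σ) * M ^ (σ - 1) := by ring
    _ ≤ c ^ (1 - σ) * L / (-σ) + c ^ (1 - σ) := by
        gcongr; linarith
    _ = c ^ (1 - σ) * (1 + L / (-σ)) := by ring

theorem stmt_14_general (η₁ η₂ σ : ℝ) (m : ℕ)
    (h1 : 0 < η₂) (hσ : σ < 0)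
    (hσ' : -σ = 4 * Real.pi * η₁ * η₂ - 1)
    (hm2 : η₁ + η₂ < m + 1) :
    Real.sqrt (η₁ ^ 2 + η₂ ^ 2) ^ (1 - σ) *
      (((m : ℝ) + 1) ^ σ / (-σ) + ((m : ℝ) + 1) ^ (σ - 1)) ≤
    (1 + (η₁ + η₂ + 1) / (4 * Real.pi * η₁ * η₂ - 1)) *
      Real.exp (-2 * Real.pi * (η₁ ^ 2 * η₂ ^ 2) / (η₁ ^ 2 + η₂ ^ 2)) := by
  have hη₁ : 0 < η₁ := by
    have : 0 < η₁ * η₂ := by nlinarith [pi_pos]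
    exact pos_of_mul_pos_left this h1.le
  set c := exp (-(η₁ * η₂ / (2 * (η₁ ^ 2 + η₂ ^ 2))))
  have hS := sqrt_sq_add_sq_le_exp_mul_add hη₁.le h1.le
  have hc : c ^ (1 - σ) = exp (-2 * π * (η₁ ^ 2 * η₂ ^ 2) / (η₁ ^ 2 + η₂ ^ 2)) := by
    rw [← exp_mul, show 1 - σ = 4 * π * η₁ * η₂ by linarith]
    congr 1; field_simp; ring
  rw [← hσ', ← hc, mul_comm _ (c ^ _)]
  exact rpow_one_sub_mul_add_le_of_le_mul (sqrt_nonneg _) (by positivity) hσ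
    (hS.trans (by gcongr)) (hS.trans (mul_le_mul_of_nonneg_left (by linarith) (exp_pos _).le))

theorem stmt_14 (η₁ η₂ σ : ℝ) (m : ℕ)
    (h1 : 0 < η₂) (h2 : η₂ ≤ η₁) (hσ : σ < 0)
    (hσ' : -σ = 4 * Real.pi * η₁ * η₂ - 1)
    (hm1 : (m : ℝ) ≤ η₁ + η₂) (hm2 : η₁ + η₂ < m + 1) :
    Real.sqrt (η₁ ^ 2 + η₂ ^ 2) ^ (1 - σ) *
      (((m : ℝ) + 1) ^ σ / (-σ) + ((m : ℝ) + 1) ^ (σ - 1)) ≤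
    (1 + (η₁ + η₂ + 1) / (4 * Real.pi * η₁ * η₂ - 1)) *
      Real.exp (-2 * Real.pi * (η₁ ^ 2 * η₂ ^ 2) / (η₁ ^ 2 + η₂ ^ 2)) :=
  stmt_14_general η₁ η₂ σ m h1 hσ hσ' hm2
end

section
/- Let t ≥ 1 and σ real with t^ε ≤ 1 - σ for some 0 < ε < 1/2 and 1-σ ≤ t, and let η = η₁ + iη₂ be the square root of (t + i(1-σ))/(2π) with η₁ + η₂ > 0. Then |η|² ≤ √2·t/(2π) ≤ √2·η₁² and |η| ≤ (4/3)·η₁, and sinh(πη₂) ≥ πη₂ ≥ a₂·t^(ε - 1/2), where a₂ = √π/(2√(√2+1)). -/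
/-!
Write `η² = (x + iy)/c` with `|y| ≤ x`. Then `‖η‖² = √(x² + y²)/c ≤ √2·x/c`, while
`η₁² - η₂² = x/c` gives `η₁² ≥ x/c` and, averaged with the bound on `‖η‖²`,
`η₁² ≤ (√2 + 1)·x/(2c)`. The lower bound on `η₂` follows from `2η₁η₂ = y/c` and this upper
bound on `η₁`.
-/

open Complex Real

theorem Real.sqrt_sq_add_sq_le {x y : ℝ} (h : |y| ≤ x) : √(x ^ 2 + y ^ 2) ≤ √2 * x := by
  have hx : 0 ≤ x := (abs_nonneg y).trans h
  rw [Real.sqrt_le_left (by positivity), mul_pow, Real.sq_sqrt zero_le_two]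
  nlinarith [sq_le_sq' (neg_le_of_abs_le h) (le_of_abs_le h)]

section SquareRoot

variable {η : ℂ} {x y c : ℝ}

theorem re_sq_sub_im_sq_of_sq_eq (h : η ^ 2 = ((x : ℂ) + y * I) / c) :
    η.re ^ 2 - η.im ^ 2 = x / c := by
  simpa [sq] using congrArg re h

theorem two_mul_re_mul_im_of_sq_eq (h : η ^ 2 = ((x : ℂ) + y * I) / c) :
    2 * η.re * η.im = y / c := by
  have him := congrArg im h
  simp only [sq, mul_im, div_ofReal_im, add_im, ofReal_im, ofReal_re, I_im, mul_one, I_re,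
    mul_zero, add_zero, zero_add] at him
  linarith

theorem div_le_re_sq_of_sq_eq (h : η ^ 2 = ((x : ℂ) + y * I) / c) : x / c ≤ η.re ^ 2 := by
  linarith [re_sq_sub_im_sq_of_sq_eq h, sq_nonneg η.im]

theorem norm_sq_of_sq_eq (h : η ^ 2 = ((x : ℂ) + y * I) / c) :
    ‖η‖ ^ 2 = √(x ^ 2 + y ^ 2) / |c| := by
  rw [← norm_pow, h, norm_div, norm_real, Real.norm_eq_abs, norm_add_mul_I]

theorem norm_sq_le_of_sq_eq (h : η ^ 2 = ((x : ℂ) + y * I) / c) (hc : 0 < c) (hy : |y| ≤ x) :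
    ‖η‖ ^ 2 ≤ √2 * x / c := by
  rw [norm_sq_of_sq_eq h, abs_of_pos hc]
  gcongr
  exact Real.sqrt_sq_add_sq_le hy

theorem re_sq_le_of_sq_eq (h : η ^ 2 = ((x : ℂ) + y * I) / c) (hc : 0 < c) (hy : |y| ≤ x) :
    η.re ^ 2 ≤ (√2 + 1) * x / (2 * c) := by
  have hnorm := norm_sq_le_of_sq_eq h hc hy
  rw [Complex.sq_norm, normSq_apply, le_div_iff₀ hc] at hnorm
  have hdiff := re_sq_sub_im_sq_of_sq_eq h
  rw [eq_div_iff hc.ne'] at hdiff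
  rw [le_div_iff₀ (by positivity)]
  nlinarith

theorem re_pos_and_im_pos_of_sq_eq (h : η ^ 2 = ((x : ℂ) + y * I) / c) (hc : 0 < c)
    (hy : 0 < y) (hsum : 0 < η.re + η.im) : 0 < η.re ∧ 0 < η.im := by
  have hprod : 0 < η.re * η.im := by
    linarith [two_mul_re_mul_im_of_sq_eq h, div_pos hy hc]
  rcases mul_pos_iff.mp hprod with hpos | ⟨hre, him⟩
  · exact hpos
  · linarith

end SquareRoot

theorem sqrt_pi_div_mul_le_pi_mul {a b u K T : ℝ} (ha : 0 < a) (hb : 0 ≤ b) (hK : 0 < K)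
    (hT : 0 < T) (hu : u ≤ 4 * π * a * b) (haT : a ^ 2 ≤ K * T / (4 * π)) :
    √π / (2 * √K) * (u / √T) ≤ π * b := by
  have ha' : 2 * √π * a ≤ √K * √T := by
    rw [← Real.sqrt_mul hK.le, Real.le_sqrt (by positivity) (by positivity), mul_pow, mul_pow,
      Real.sq_sqrt pi_pos.le]
    rw [le_div_iff₀ (by positivity)] at haT
    linarith
  rw [div_mul_div_comm, div_le_iff₀ (by positivity)]
  calc √π * u ≤ √π * (4 * π * a * b) := by gcongr
    _ = 2 * π * b * (2 * √π * a) := by ring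
    _ ≤ 2 * π * b * (√K * √T) := by gcongr
    _ = π * b * (2 * √K * √T) := by ring

theorem stmt_19_general (t σ ε : ℝ) (η : ℂ) (ht : 1 ≤ t)
    (hσ1 : t ^ ε ≤ 1 - σ) (hσ2 : 1 - σ ≤ t)
    (hη : η ^ 2 = ((t : ℂ) + (1 - σ) * Complex.I) / (2 * Real.pi))
    (hsum : 0 < η.re + η.im) :
    ‖η‖ ^ 2 ≤ Real.sqrt 2 * t / (2 * Real.pi) ∧
    Real.sqrt 2 * t / (2 * Real.pi) ≤ Real.sqrt 2 * η.re ^ 2 ∧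
    ‖η‖ ≤ 4 / 3 * η.re ∧
    Real.sinh (Real.pi * η.im) ≥ Real.pi * η.im ∧
    Real.pi * η.im ≥ Real.pi.sqrt / (2 * Real.sqrt (Real.sqrt 2 + 1)) * t ^ (ε - 1 / 2) := by
  have ht0 : 0 < t := zero_lt_one.trans_le ht
  have h2π : 0 < 2 * π := by positivity
  have hs0 : 0 < 1 - σ := (Real.rpow_pos_of_pos ht0 ε).trans_le hσ1
  have hs : |1 - σ| ≤ t := by rwa [abs_of_pos hs0]
  have hη' : η ^ 2 = ((t : ℂ) + ((1 - σ : ℝ) : ℂ) * I) / ((2 * π : ℝ) : ℂ) := by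
    push_cast
    exact hη
  obtain ⟨hre, him⟩ := re_pos_and_im_pos_of_sq_eq hη' h2π hs0 hsum
  have hnorm := norm_sq_le_of_sq_eq hη' h2π hs
  have hre_lower : √2 * t / (2 * π) ≤ √2 * η.re ^ 2 := by
    rw [mul_div_assoc]
    exact mul_le_mul_of_nonneg_left (div_le_re_sq_of_sq_eq hη') (Real.sqrt_nonneg 2)
  refine ⟨hnorm, hre_lower, ?_, Real.self_le_sinh_iff.mpr (by positivity), ?_⟩
  · have hsqrt2 : √2 ≤ (4 / 3) ^ 2 := by
      rw [Real.sqrt_le_left (by norm_num)]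
      norm_num
    refine le_of_pow_le_pow_left₀ two_ne_zero (by positivity) ?_
    calc ‖η‖ ^ 2 ≤ √2 * η.re ^ 2 := hnorm.trans hre_lower
      _ ≤ (4 / 3) ^ 2 * η.re ^ 2 := by gcongr
      _ = (4 / 3 * η.re) ^ 2 := by ring
  · rw [ge_iff_le, Real.rpow_sub ht0, Real.rpow_div_two_eq_sqrt _ ht0.le, Real.rpow_one]
    refine sqrt_pi_div_mul_le_pi_mul hre him.le (by positivity) ht0 ?_ ?_
    · have hprod := two_mul_re_mul_im_of_sq_eq hη'
      rw [eq_div_iff h2π.ne'] at hprod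
      linarith
    · exact (re_sq_le_of_sq_eq hη' h2π hs).trans_eq (by ring)

theorem stmt_19 (t σ ε : ℝ) (η : ℂ) (ht : 1 ≤ t) (hε1 : 0 < ε) (hε2 : ε < 1 / 2)
    (hσ1 : t ^ ε ≤ 1 - σ) (hσ2 : 1 - σ ≤ t)
    (hη : η ^ 2 = ((t : ℂ) + (1 - σ) * Complex.I) / (2 * Real.pi))
    (hsum : 0 < η.re + η.im) :
    ‖η‖ ^ 2 ≤ Real.sqrt 2 * t / (2 * Real.pi) ∧
    Real.sqrt 2 * t / (2 * Real.pi) ≤ Real.sqrt 2 * η.re ^ 2 ∧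
    ‖η‖ ≤ 4 / 3 * η.re ∧
    Real.sinh (Real.pi * η.im) ≥ Real.pi * η.im ∧
    Real.pi * η.im ≥ Real.pi.sqrt / (2 * Real.sqrt (Real.sqrt 2 + 1)) * t ^ (ε - 1 / 2) :=
  stmt_19_general t σ ε η ht hσ1 hσ2 hη hsum
end
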